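/- Let f be a C²-diffeomorphism of S¹ without periodic points, with partial quotients a_n and convergent denominators q_n of ρ(f), A_n(k) = log ‖Df^{k q_n}‖ for 0 ≤ k ≤ a_{n+1}+1, and E_n = max{ ‖log Df^{q_n}‖, max_{x∈S¹} |D log Df^{q_n}(x)|·|I_{n−1}(x)| }. Then, with C₁ the Denjoy constant of f (so that ‖Df^{±q_m}‖ ≤ C₁ for all m), one has A_n(a_{n+1}+1) − A_n(a_{n+1}) ≤ C₁³·E_n·exp(−A_n(a_{n+1}+1)). -/
import Mathlib


open Filter Topology Set

/-- `F : ℝ → ℝ` is (a lift of) an orientation-preserving circle map `S¹ = ℝ/ℤ → S¹`. -/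
def IsCircleLift (F : ℝ → ℝ) : Prop := ∀ x, F (x + 1) = F x + 1

/-- The circle map with lift `F` has no periodic points: no point `x` of `S¹ = ℝ/ℤ`
satisfies `f^q(x) = x` for some `q ≥ 1`. -/
def NoPeriodicPoints (F : ℝ → ℝ) : Prop :=
  ∀ (x : ℝ) (q : ℕ) (m : ℤ), 1 ≤ q → F^[q] x ≠ x + (m : ℝ)

/-- `max_{x ∈ S¹} |g x|` for a `1`-periodic function `g`. -/
noncomputable def circSup (g : ℝ → ℝ) : ℝ := sSup ((fun x => |g x|) '' Set.Icc (0:ℝ) 1)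

/-- `‖Df^n‖ = max_{x ∈ S¹} |Df^n(x)|`, for a circle map `f` with lift `F`. -/
noncomputable def derivNorm (F : ℝ → ℝ) (n : ℕ) : ℝ := circSup (deriv (F^[n]))

/-- The growth sequence `Γ_n(f) = max {‖Df^n‖, ‖Df^{-n}‖}`, where `F` is a lift of `f`
and `G` a lift of `f⁻¹`. -/
noncomputable def growthSeq (F G : ℝ → ℝ) (n : ℕ) : ℝ := max (derivNorm F n) (derivNorm G n)

/-- The Gauss map `x ↦ {1/x}`. -/
noncomputable def gaussMap (x : ℝ) : ℝ := Int.fract x⁻¹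

/-- `cfA α n = a_{n+1}(α)`, the `(n+1)`-st partial quotient of the continued fraction
expansion `α = [a₁, a₂, a₃, …]` (of the fractional part of `α`). -/
noncomputable def cfA (α : ℝ) (n : ℕ) : ℕ := (⌊(gaussMap^[n] (Int.fract α))⁻¹⌋).toNat

/-- The denominators `q_n` of the continued fraction convergents of `α`:
`q₀ = 1`, `q₁ = a₁`, `q_{n+1} = a_{n+1} q_n + q_{n-1}`. -/
noncomputable def cfQ (α : ℝ) : ℕ → ℕ
  | 0 => 1
  | 1 => cfA α 0
  | n + 2 => cfA α (n + 1) * cfQ α (n + 1) + cfQ α n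

/-- The length of the smaller arc of `S¹ = ℝ/ℤ` with endpoints `x mod 1` and `y mod 1`. -/
noncomputable def arcLen (x y : ℝ) : ℝ := |Int.fract (y - x + 1/2) - 1/2|

/-- The smaller arc of `S¹ = ℝ/ℤ` with endpoints `x mod 1` and `y mod 1`, realized as an
interval in `ℝ` starting at the representative `x` (points of `S¹` are identified with
their representatives). -/
noncomputable def smallArc (x y : ℝ) : Set ℝ :=
  Set.uIcc x (x + (Int.fract (y - x + 1/2) - 1/2))

/-- The Katznelson–Ornstein sequence
`E_n = max { ‖log Df^{q_n}‖, max_{x∈S¹} |D log Df^{q_n}(x)|·|I_{n-1}(x)| }`,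
where `I_{n-1}(x)` is the smaller arc with endpoints `x` and `f^{q_{n-1}}(x)`. -/
noncomputable def KOseq (F : ℝ → ℝ) (α : ℝ) (n : ℕ) : ℝ :=
  max (circSup (fun x => Real.log (deriv (F^[cfQ α n]) x)))
      (sSup ((fun x => |deriv (fun y => Real.log (deriv (F^[cfQ α n]) y)) x|
        * arcLen x (F^[cfQ α (n - 1)] x)) '' Set.Icc (0:ℝ) 1))

section Aux

variable {F G : ℝ → ℝ}

lemma lift_iterate (hlift : IsCircleLift F) (n : ℕ) : ∀ x, F^[n] (x + 1) = F^[n] x + 1 := by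
  induction n with
  | zero => simp
  | succ n ih =>
    intro x
    rw [Function.iterate_succ_apply, hlift x, ih (F x), Function.iterate_succ_apply]

lemma glift (hlift : IsCircleLift F) (hFG : Function.LeftInverse G F)
    (hGF : Function.RightInverse G F) : IsCircleLift G := by
  intro x
  have h1 : F (G x + 1) = x + 1 := by rw [hlift, hGF]
  calc G (x + 1) = G (F (G x + 1)) := by rw [h1]
    _ = G x + 1 := hFG _

lemma diffIter (hF : ContDiff ℝ 2 F) (n : ℕ) : Differentiable ℝ (F^[n]) := by
  induction n with
  | zero => simpa using differentiable_id
  | succ n ih =>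
    rw [Function.iterate_succ']
    exact (hF.differentiable (by norm_num)).comp ih

lemma derivF_pos (hlift : IsCircleLift F) (hF : ContDiff ℝ 2 F) (hG : ContDiff ℝ 2 G)
    (hFG : Function.LeftInverse G F) : ∀ x, 0 < deriv F x := by
  have hFd : Differentiable ℝ F := hF.differentiable (by norm_num)
  have hGd : Differentiable ℝ G := hG.differentiable (by norm_num)
  have hne : ∀ x, deriv F x ≠ 0 := by
    intro x hx
    have hid : G ∘ F = id := hFG.comp_eq_id
    have h1 : HasDerivAt (G ∘ F) (deriv G (F x) * deriv F x) x :=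
      ((hGd (F x)).hasDerivAt).comp x (hFd x).hasDerivAt
    have h2 : HasDerivAt (G ∘ F) 1 x := by rw [hid]; simpa using hasDerivAt_id x
    have := h1.unique h2
    rw [hx, mul_zero] at this
    exact zero_ne_one this
  have hFc : Continuous (deriv F) := hF.continuous_deriv (by norm_num)
  -- a point where deriv F = 1 > 0
  obtain ⟨c, _, hc⟩ := exists_hasDerivAt_eq_slope F (deriv F) (by norm_num : (0:ℝ) < 1)
    hFd.continuous.continuousOn (fun x _ => (hFd x).hasDerivAt)
  have hc1 : deriv F c = 1 := by
    rw [hc]; have := hlift 0; rw [zero_add] at this; rw [this]; ring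
  intro x
  by_contra hle
  push_neg at hle
  have hlt : deriv F x < 0 := lt_of_le_of_ne hle (hne x)
  have h0 : (0:ℝ) ∈ uIcc (deriv F x) (deriv F c) := by
    rw [Set.mem_uIcc]; left; exact ⟨hlt.le, by rw [hc1]; norm_num⟩
  obtain ⟨z, _, hz⟩ := intermediate_value_uIcc hFc.continuousOn h0
  exact hne z hz

lemma derivIter_pos (hlift : IsCircleLift F) (hF : ContDiff ℝ 2 F) (hG : ContDiff ℝ 2 G)
    (hFG : Function.LeftInverse G F) : ∀ n x, 0 < deriv (F^[n]) x := by
  intro n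
  induction n with
  | zero => intro x; simp
  | succ n ih =>
    intro x
    have h : F^[n+1] = F ∘ F^[n] := Function.iterate_succ' F n
    rw [h, deriv_comp x ((hF.differentiable (by norm_num)) _)
      ((diffIter hF n) x)]
    exact mul_pos (derivF_pos hlift hF hG hFG _) (ih x)

lemma deriv_iterate_add (hF : ContDiff ℝ 2 F) (m n : ℕ) (x : ℝ) :
    deriv (F^[m + n]) x = deriv (F^[m]) (F^[n] x) * deriv (F^[n]) x := by
  have h : F^[m + n] = F^[m] ∘ F^[n] := Function.iterate_add F m n
  rw [h, deriv_comp x ((diffIter hF m) _) ((diffIter hF n) x)]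

lemma contDiffIter (hF : ContDiff ℝ 2 F) (n : ℕ) : ContDiff ℝ 2 (F^[n]) := by
  induction n with
  | zero => simpa using contDiff_id
  | succ n ih => rw [Function.iterate_succ']; exact hF.comp ih

lemma derivIter_periodic (hlift : IsCircleLift F) (n : ℕ) :
    Function.Periodic (deriv (F^[n])) 1 := by
  intro x
  have h : (fun y => F^[n] (y + 1)) = fun y => F^[n] y + 1 := funext (lift_iterate hlift n)
  calc deriv (F^[n]) (x + 1) = deriv (fun y => F^[n] (y + 1)) x := (deriv_comp_add_const ..).symm
    _ = deriv (fun y => F^[n] y + 1) x := by rw [h]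
    _ = deriv (F^[n]) x := deriv_add_const 1

lemma circSup_bdd {g : ℝ → ℝ} (hg : Continuous g) :
    BddAbove ((fun x => |g x|) '' Set.Icc (0:ℝ) 1) :=
  (isCompact_Icc.image (continuous_abs.comp hg)).bddAbove

lemma le_circSup {g : ℝ → ℝ} (hg : Continuous g) (hp : Function.Periodic g 1) (x : ℝ) :
    |g x| ≤ circSup g := by
  have hx : Int.fract x ∈ Set.Icc (0:ℝ) 1 := ⟨Int.fract_nonneg _, (Int.fract_lt_one _).le⟩
  have hgx : g (Int.fract x) = g x := by
    have := hp.sub_int_mul_eq (f := g) (x := x) ⌊x⌋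
    rw [mul_one] at this
    rw [Int.fract, this]
  calc |g x| = |g (Int.fract x)| := by rw [hgx]
    _ ≤ circSup g := le_csSup (circSup_bdd hg) ⟨Int.fract x, hx, rfl⟩

lemma circSup_exists {g : ℝ → ℝ} (hg : Continuous g) :
    ∃ x ∈ Set.Icc (0:ℝ) 1, circSup g = |g x| := by
  have hK : IsCompact ((fun x => |g x|) '' Set.Icc (0:ℝ) 1) :=
    isCompact_Icc.image (continuous_abs.comp hg)
  have hne : ((fun x => |g x|) '' Set.Icc (0:ℝ) 1).Nonempty :=
    ⟨|g 0|, 0, by norm_num, rfl⟩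
  obtain ⟨a, ha, hgr⟩ := hK.exists_isGreatest hne
  obtain ⟨x, hx, rfl⟩ := ha
  exact ⟨x, hx, IsGreatest.csSup_eq ⟨⟨x, hx, rfl⟩, hgr⟩⟩

variable (hlift : IsCircleLift F) (hF : ContDiff ℝ 2 F) (hG : ContDiff ℝ 2 G)
  (hFG : Function.LeftInverse G F) (hGF : Function.RightInverse G F)

include hlift hF hG hFG in
lemma derivNorm_pos (n : ℕ) : 0 < derivNorm F n := by
  have h := le_circSup ((contDiffIter hF n).continuous_deriv (by norm_num))
    (derivIter_periodic hlift n) 0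
  have hp := derivIter_pos hlift hF hG hFG n 0
  calc (0:ℝ) < deriv (F^[n]) 0 := hp
    _ ≤ |deriv (F^[n]) 0| := le_abs_self _
    _ ≤ derivNorm F n := h

include hlift hF hG hFG in
lemma derivNorm_le_point (n : ℕ) (x : ℝ) : deriv (F^[n]) x ≤ derivNorm F n :=
  le_trans (le_abs_self _) (le_circSup ((contDiffIter hF n).continuous_deriv (by norm_num))
    (derivIter_periodic hlift n) x)

include hlift hF hG hFG in
lemma derivNorm_add_le (m n : ℕ) :
    derivNorm F (m + n) ≤ derivNorm F m * derivNorm F n := by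
  obtain ⟨x, _, hx⟩ := circSup_exists ((contDiffIter hF (m + n)).continuous_deriv (by norm_num))
  rw [derivNorm, hx, abs_of_pos (derivIter_pos hlift hF hG hFG _ x),
    deriv_iterate_add hF m n x]
  exact mul_le_mul (derivNorm_le_point hlift hF hG hFG m _)
    (derivNorm_le_point hlift hF hG hFG n x)
    (derivIter_pos hlift hF hG hFG n x).le
    (derivNorm_pos hlift hF hG hFG m).le

include hlift hF hG hFG hGF in
lemma derivNorm_sub_le (m r : ℕ) :
    derivNorm F m ≤ derivNorm F (m + r) * derivNorm G r := by
  have hGlift := glift hlift hFG hGF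
  obtain ⟨y, _, hy⟩ := circSup_exists ((contDiffIter hF m).continuous_deriv (by norm_num))
  set x := G^[r] y with hxdef
  have hFx : F^[r] x = y := hGF.iterate r y
  -- chain rule identities
  have h1 : deriv (F^[m + r]) x = deriv (F^[m]) y * deriv (F^[r]) x := by
    rw [deriv_iterate_add hF m r x, hFx]
  have h2 : deriv (G^[r]) y * deriv (F^[r]) x = 1 := by
    have hid : G^[r] ∘ F^[r] = id := (hFG.iterate r).comp_eq_id
    have hcomp : HasDerivAt (G^[r] ∘ F^[r]) (deriv (G^[r]) (F^[r] x) * deriv (F^[r]) x) x :=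
      ((diffIter hG r (F^[r] x)).hasDerivAt).comp x ((diffIter hF r x).hasDerivAt)
    have hone : HasDerivAt (G^[r] ∘ F^[r]) 1 x := by rw [hid]; simpa using hasDerivAt_id x
    have := hcomp.unique hone
    rwa [hFx] at this
  have hFrx : 0 < deriv (F^[r]) x := derivIter_pos hlift hF hG hFG r x
  have hGry : 0 < deriv (G^[r]) y := by
    nlinarith
  have key : deriv (F^[m]) y = deriv (F^[m + r]) x * deriv (G^[r]) y := by
    have : deriv (F^[m + r]) x * deriv (G^[r]) y
        = deriv (F^[m]) y * (deriv (G^[r]) y * deriv (F^[r]) x) := by rw [h1]; ring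
    rw [this, h2, mul_one]
  rw [derivNorm, hy, abs_of_pos (derivIter_pos hlift hF hG hFG m y), key]
  exact mul_le_mul (derivNorm_le_point hlift hF hG hFG (m + r) x)
    (derivNorm_le_point hGlift hG hF hGF r y) hGry.le
    (derivNorm_pos hlift hF hG hFG (m + r)).le

end Aux


/-- Let `f` be a `C²`-diffeomorphism of `S¹` without periodic points, with partial
quotients `a_{n+1} = cfA α n` and convergent denominators `q_n = cfQ α n` of `ρ(f) = α`,
`A_n(k) = log ‖Df^{k q_n}‖`, and `E_n = KOseq F α n`. Then, with `C₁` the Denjoy constant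
of `f` (so that `‖Df^{±q_m}‖ ≤ C₁` for all `m`), one has
`A_n(a_{n+1}+1) − A_n(a_{n+1}) ≤ C₁³·E_n·exp(−A_n(a_{n+1}+1))` for every `n`. -/
theorem extension_step_estimate
    (F G : ℝ → ℝ) (hlift : IsCircleLift F)
    (hF : ContDiff ℝ 2 F) (hG : ContDiff ℝ 2 G)
    (hFG : Function.LeftInverse G F) (hGF : Function.RightInverse G F)
    (hper : NoPeriodicPoints F)
    (α : ℝ) (hα : Tendsto (fun n : ℕ => F^[n] 0 / (n : ℝ)) atTop (𝓝 α))
    (hirr : Irrational α)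
    (C₁ : ℝ) (hC₁ : 1 ≤ C₁)
    (hDenjoy : ∀ m : ℕ, derivNorm F (cfQ α m) ≤ C₁ ∧ derivNorm G (cfQ α m) ≤ C₁) :
    ∀ n : ℕ,
      Real.log (derivNorm F ((cfA α n + 1) * cfQ α n))
          - Real.log (derivNorm F (cfA α n * cfQ α n))
        ≤ C₁ ^ 3 * KOseq F α n *
            Real.exp (-Real.log (derivNorm F ((cfA α n + 1) * cfQ α n))) := by
  intro n
  have hC₀ : (0:ℝ) < C₁ := lt_of_lt_of_le one_pos hC₁
  have hNpos : ∀ k, 0 < derivNorm F k := derivNorm_pos hlift hF hG hFG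
  set q := cfQ α n with hq
  set a := cfA α n with ha
  set N := derivNorm F ((a + 1) * q) with hN
  set M := derivNorm F (a * q) with hM
  set S := derivNorm F q with hS
  set E := KOseq F α n with hE
  -- submultiplicativity
  have hNle : N ≤ M * S := by
    have hb : (a + 1) * q = a * q + q := by ring
    rw [hN, hb]
    exact derivNorm_add_le hlift hF hG hFG _ _
  -- the sup of |log Df^q|
  set L := circSup (fun x => Real.log (deriv (F^[q]) x)) with hL
  have hlogcont : Continuous (fun x => Real.log (deriv (F^[q]) x)) :=
    ((contDiffIter hF q).continuous_deriv (by norm_num)).log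
      (fun x => (derivIter_pos hlift hF hG hFG q x).ne')
  have hlogper : Function.Periodic (fun x => Real.log (deriv (F^[q]) x)) 1 := by
    intro x
    simp only [derivIter_periodic hlift q x]
  have hLle : ∀ x, |Real.log (deriv (F^[q]) x)| ≤ L := le_circSup hlogcont hlogper
  have hL0 : 0 ≤ L := le_trans (abs_nonneg _) (hLle 0)
  have hSL : Real.log S ≤ L := by
    obtain ⟨x, _, hx⟩ := circSup_exists ((contDiffIter hF q).continuous_deriv (by norm_num))
    have hxS : S = deriv (F^[q]) x := by
      rw [hS, derivNorm, hx, abs_of_pos (derivIter_pos hlift hF hG hFG q x)]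
    rw [hxS]
    exact le_trans (le_abs_self _) (hLle x)
  have hLE : L ≤ E := le_max_left _ _
  have hE0 : 0 ≤ E := le_trans hL0 hLE
  -- LHS ≤ L
  have hLHS : Real.log N - Real.log M ≤ L := by
    have h1 : Real.log N ≤ Real.log (M * S) :=
      Real.log_le_log (hNpos _) hNle
    rw [Real.log_mul (hNpos _).ne' (hNpos _).ne'] at h1
    linarith
  -- N ≤ C₁ ^ 3
  have hNC : N ≤ C₁ ^ 3 := by
    match n, hq, ha with
    | 0, hq, ha =>
      have harith : (a + 1) * q = cfQ α 1 + cfQ α 0 := by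
        rw [hq, ha]; simp [cfQ]
      have h1 : N ≤ derivNorm F (cfQ α 1) * derivNorm F (cfQ α 0) := by
        rw [hN, harith]; exact derivNorm_add_le hlift hF hG hFG _ _
      have h2 := (hDenjoy 1).1
      have h3 := (hDenjoy 0).1
      have p1 := hNpos (cfQ α 1)
      have p0 := hNpos (cfQ α 0)
      have key := mul_le_mul h2 h3 p0.le hC₀.le
      nlinarith [key]
    | (m + 1), hq, ha =>
      have harith : (a + 1) * q + cfQ α m = cfQ α (m + 2) + cfQ α (m + 1) := by
        rw [hq, ha]
        show (cfA α (m+1) + 1) * cfQ α (m+1) + cfQ α m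
          = (cfA α (m+1) * cfQ α (m+1) + cfQ α m) + cfQ α (m+1)
        ring
      have h1 : N ≤ derivNorm F ((a + 1) * q + cfQ α m) * derivNorm G (cfQ α m) := by
        rw [hN]; exact derivNorm_sub_le hlift hF hG hFG hGF _ _
      rw [harith] at h1
      have h2 : derivNorm F (cfQ α (m + 2) + cfQ α (m + 1))
          ≤ derivNorm F (cfQ α (m + 2)) * derivNorm F (cfQ α (m + 1)) :=
        derivNorm_add_le hlift hF hG hFG _ _
      have h3 := (hDenjoy (m + 2)).1
      have h4 := (hDenjoy (m + 1)).1
      have h5 := (hDenjoy m).2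
      have p2 := hNpos (cfQ α (m + 2))
      have p1 := hNpos (cfQ α (m + 1))
      have pG : 0 < derivNorm G (cfQ α m) :=
        derivNorm_pos (glift hlift hFG hGF) hG hF hGF (cfQ α m)
      nlinarith [mul_le_mul h3 h4 p1.le (le_trans p2.le h3)]
  -- conclude
  have hexp : Real.exp (-Real.log N) = N⁻¹ := by
    rw [Real.exp_neg, Real.exp_log (hNpos _)]
  rw [hexp]
  have hinv : (C₁ ^ 3)⁻¹ ≤ N⁻¹ := inv_anti₀ (hNpos _) hNC
  calc Real.log N - Real.log M ≤ L := hLHS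
    _ ≤ E := hLE
    _ = C₁ ^ 3 * E * (C₁ ^ 3)⁻¹ := by field_simp
    _ ≤ C₁ ^ 3 * E * N⁻¹ :=
        mul_le_mul_of_nonneg_left hinv (mul_nonneg (by positivity) hE0)
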